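/- arXiv:math/0501438 — 8 statements merged into one kernel-verified Lean document; each statement's English description precedes it below -/
import Mathlib

section
/- Every lattice L with more than one element has a proper congruence-preserving extension; that is, there exist a lattice K and a lattice embedding f : L → K which is not surjective such that for every congruence Θ of L there is exactly one congruence Φ of K whose restriction along f equals Θ (i.e., Φ(f x, f y) ↔ Θ(x, y) for all x, y ∈ L). -/
/-!
Fix `a : L`. The Boolean triples of `L`, the triples `(x, y, z)` with `x = (x ⊔ y) ⊓ (x ⊔ z)`
and likewise for `y` and `z`, form a lattice `K` under the componentwise meet and the closure of
the componentwise join, and `x ↦ (x, a, x ⊓ a)` embeds `L` into `K`; it misses `(b, b, b)` for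
`b ≠ a`. A congruence of `L` applied componentwise is a congruence of `K`, because the closure is
a lattice polynomial in the coordinates. It is the only congruence of `K` extending it: taking `o`
below `a` and below all coordinates in play, a triple is the join of `(x, o, o)`, `(o, y, o)` and
`(o, o, z)`, each cut out of it by a meet; `(o, y, o)` and `(o, o, y)` are perspective to
`(y, o, o)`, and `(y, o, o)` and `(y, a, y ⊓ a)` are obtained from each other by a meet and a
join. A congruence respects joins and meets with fixed elements, so it is determined by its
restriction to the embedded copy of `L`.
-/

universe u

/-- A *congruence* of a lattice: an equivalence relation compatible with
joins and meets. -/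
def IsLatticeCongruence {α : Type*} [Lattice α] (Θ : α → α → Prop) : Prop :=
  Equivalence Θ ∧
    ∀ a b c d : α, Θ a b → Θ c d → Θ (a ⊔ c) (b ⊔ d) ∧ Θ (a ⊓ c) (b ⊓ d)

variable {α β : Type*} [Lattice α] [Lattice β]

namespace IsLatticeCongruence

variable {Θ : α → α → Prop} {Ψ : β → β → Prop}

theorem refl (hΘ : IsLatticeCongruence Θ) (a : α) : Θ a a := hΘ.1.refl a

theorem sup (hΘ : IsLatticeCongruence Θ) {a b c d : α} (hab : Θ a b) (hcd : Θ c d) :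
    Θ (a ⊔ c) (b ⊔ d) :=
  (hΘ.2 a b c d hab hcd).1

theorem inf (hΘ : IsLatticeCongruence Θ) {a b c d : α} (hab : Θ a b) (hcd : Θ c d) :
    Θ (a ⊓ c) (b ⊓ d) :=
  (hΘ.2 a b c d hab hcd).2

theorem sup_right (hΘ : IsLatticeCongruence Θ) {a b : α} (h : Θ a b) (c : α) :
    Θ (a ⊔ c) (b ⊔ c) :=
  hΘ.sup h (hΘ.refl c)

theorem inf_right (hΘ : IsLatticeCongruence Θ) {a b : α} (h : Θ a b) (c : α) :
    Θ (a ⊓ c) (b ⊓ c) :=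
  hΘ.inf h (hΘ.refl c)

end IsLatticeCongruence

def prodRel (Θ : α → α → Prop) (Ψ : β → β → Prop) (p q : α × β) : Prop :=
  Θ p.1 q.1 ∧ Ψ p.2 q.2

theorem IsLatticeCongruence.prod {Θ : α → α → Prop} {Ψ : β → β → Prop}
    (hΘ : IsLatticeCongruence Θ) (hΨ : IsLatticeCongruence Ψ) :
    IsLatticeCongruence (prodRel Θ Ψ) :=
  ⟨⟨fun _ => ⟨hΘ.refl _, hΨ.refl _⟩, fun h => ⟨hΘ.1.symm h.1, hΨ.1.symm h.2⟩,
      fun h h' => ⟨hΘ.1.trans h.1 h'.1, hΨ.1.trans h.2 h'.2⟩⟩,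
    fun _ _ _ _ h h' =>
      ⟨⟨hΘ.sup h.1 h'.1, hΨ.sup h.2 h'.2⟩, ⟨hΘ.inf h.1 h'.1, hΨ.inf h.2 h'.2⟩⟩⟩

variable {L : Type*} [Lattice L]

def tripleClosure : L × L × L → L × L × L
  | (x, y, z) => ((x ⊔ y) ⊓ (x ⊔ z), (y ⊔ x) ⊓ (y ⊔ z), (z ⊔ x) ⊓ (z ⊔ y))

def IsBooleanTriple (t : L × L × L) : Prop := tripleClosure t = t

theorem le_tripleClosure (t : L × L × L) : t ≤ tripleClosure t :=
  ⟨le_inf le_sup_left le_sup_left, le_inf le_sup_left le_sup_left,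
    le_inf le_sup_left le_sup_left⟩

theorem tripleClosure_mono : Monotone (tripleClosure (L := L)) :=
  fun _ _ ⟨hx, hy, hz⟩ => ⟨inf_le_inf (sup_le_sup hx hy) (sup_le_sup hx hz),
    inf_le_inf (sup_le_sup hy hx) (sup_le_sup hy hz),
    inf_le_inf (sup_le_sup hz hx) (sup_le_sup hz hy)⟩

theorem isBooleanTriple_tripleClosure (t : L × L × L) : IsBooleanTriple (tripleClosure t) := by
  simp only [IsBooleanTriple, tripleClosure, Prod.mk.injEq]
  refine ⟨?_, ?_, ?_⟩ <;> order

theorem IsBooleanTriple.inf {s t : L × L × L} (hs : IsBooleanTriple s) (ht : IsBooleanTriple t) :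
    IsBooleanTriple (s ⊓ t) :=
  le_antisymm (le_inf ((tripleClosure_mono inf_le_left).trans hs.le)
    ((tripleClosure_mono inf_le_right).trans ht.le)) (le_tripleClosure _)

theorem isBooleanTriple_mk_inf (x y : L) : IsBooleanTriple (x, y, x ⊓ y) := by
  simp only [IsBooleanTriple, tripleClosure, Prod.mk.injEq]
  refine ⟨?_, ?_, ?_⟩ <;> order

abbrev BooleanTriple (L : Type*) [Lattice L] : Type _ := {t : L × L × L // IsBooleanTriple t}

instance : Lattice (BooleanTriple L) where
  sup s t := ⟨tripleClosure (s.val ⊔ t.val), isBooleanTriple_tripleClosure _⟩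
  le_sup_left _ t := (le_sup_left (b := t.val)).trans (le_tripleClosure _)
  le_sup_right s _ := (le_sup_right (a := s.val)).trans (le_tripleClosure _)
  sup_le _ _ r hs ht := (tripleClosure_mono (sup_le hs ht)).trans r.2.le
  inf s t := ⟨s.val ⊓ t.val, s.2.inf t.2⟩
  inf_le_left _ _ := inf_le_left (α := L × L × L)
  inf_le_right _ _ := inf_le_right (α := L × L × L)
  le_inf _ _ _ := le_inf (α := L × L × L)

namespace BooleanTriple

theorem val_sup (s t : BooleanTriple L) : (s ⊔ t).val = tripleClosure (s.val ⊔ t.val) := rfl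

theorem val_inf (s t : BooleanTriple L) : (s ⊓ t).val = s.val ⊓ t.val := rfl

def embed (a : L) : LatticeHom L (BooleanTriple L) where
  toFun x := ⟨(x, a, x ⊓ a), isBooleanTriple_mk_inf x a⟩
  map_sup' x y := by
    apply Subtype.ext
    simp only [val_sup, Prod.mk_sup_mk, tripleClosure, Prod.mk.injEq]
    refine ⟨?_, ?_, ?_⟩ <;> order
  map_inf' x y :=
    Subtype.ext <| Prod.ext rfl <| Prod.ext (inf_idem a).symm (inf_inf_distrib_right x y a)

theorem val_embed (a x : L) : (embed a x).val = (x, a, x ⊓ a) := rfl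

theorem embed_injective (a : L) : Function.Injective (embed a) :=
  fun _ _ h => congrArg (fun t : BooleanTriple L => t.val.1) h

theorem embed_not_surjective [Nontrivial L] (a : L) : ¬ Function.Surjective (embed a) := by
  intro hsurj
  obtain ⟨b, hb⟩ := exists_ne a
  obtain ⟨x, hx⟩ := hsurj (embed b b)
  exact hb (congrArg (fun t : BooleanTriple L => t.val.2.1) hx).symm

def liftRel (Θ : L → L → Prop) (s t : BooleanTriple L) : Prop :=
  prodRel Θ (prodRel Θ Θ) s.val t.val

variable {Θ : L → L → Prop}

theorem _root_.IsLatticeCongruence.map_tripleClosure (hΘ : IsLatticeCongruence Θ)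
    {p q : L × L × L} (h : prodRel Θ (prodRel Θ Θ) p q) :
    prodRel Θ (prodRel Θ Θ) (tripleClosure p) (tripleClosure q) :=
  let ⟨hx, hy, hz⟩ := h
  ⟨hΘ.inf (hΘ.sup hx hy) (hΘ.sup hx hz), hΘ.inf (hΘ.sup hy hx) (hΘ.sup hy hz),
    hΘ.inf (hΘ.sup hz hx) (hΘ.sup hz hy)⟩

theorem isLatticeCongruence_liftRel (hΘ : IsLatticeCongruence Θ) :
    IsLatticeCongruence (liftRel Θ) :=
  have h3 := hΘ.prod (hΘ.prod hΘ)
  ⟨⟨fun s => h3.refl s.val, h3.1.symm, h3.1.trans⟩,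
    fun _ _ _ _ h h' => ⟨hΘ.map_tripleClosure (h3.sup h h'), h3.inf h h'⟩⟩

theorem liftRel_embed (hΘ : IsLatticeCongruence Θ) (a x y : L) :
    liftRel Θ (embed a x) (embed a y) ↔ Θ x y :=
  ⟨And.left, fun h => ⟨h, hΘ.refl a, hΘ.inf_right h a⟩⟩

variable {o w i x y a : L}

def single₁ (h : o ≤ w) : BooleanTriple L :=
  ⟨(w, o, o), by simp [IsBooleanTriple, tripleClosure, h]⟩

def single₂ (h : o ≤ w) : BooleanTriple L :=
  ⟨(o, w, o), by simp [IsBooleanTriple, tripleClosure, h]⟩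

def single₃ (h : o ≤ w) : BooleanTriple L :=
  ⟨(o, o, w), by simp [IsBooleanTriple, tripleClosure, h]⟩

theorem single₁_sup_single₂ (hx : o ≤ x) (ha : o ≤ a) :
    single₁ hx ⊔ single₂ ha = embed a x := by
  apply Subtype.ext
  simp only [val_sup, val_embed, single₁, single₂, Prod.mk_sup_mk, tripleClosure, Prod.mk.injEq]
  refine ⟨?_, ?_, ?_⟩ <;> order

theorem embed_inf_single₁ (hx : o ≤ x) (ha : o ≤ a) (hi : x ≤ i) :
    embed a x ⊓ single₁ (hx.trans hi) = single₁ hx := by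
  apply Subtype.ext
  simp only [val_inf, val_embed, single₁, Prod.mk_inf_mk, Prod.mk.injEq]
  refine ⟨?_, ?_, ?_⟩ <;> order

theorem single₂_sup_single₃_inf_single₁ (hw : o ≤ w) (hi : w ≤ i) :
    (single₂ hw ⊔ single₃ (hw.trans hi)) ⊓ single₁ (hw.trans hi) = single₁ hw := by
  apply Subtype.ext
  simp only [val_sup, val_inf, single₁, single₂, single₃, Prod.mk_sup_mk, Prod.mk_inf_mk,
    tripleClosure, Prod.mk.injEq]
  refine ⟨?_, ?_, ?_⟩ <;> order

theorem single₁_sup_single₃_inf_single₂ (hw : o ≤ w) (hi : w ≤ i) :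
    (single₁ hw ⊔ single₃ (hw.trans hi)) ⊓ single₂ (hw.trans hi) = single₂ hw := by
  apply Subtype.ext
  simp only [val_sup, val_inf, single₁, single₂, single₃, Prod.mk_sup_mk, Prod.mk_inf_mk,
    tripleClosure, Prod.mk.injEq]
  refine ⟨?_, ?_, ?_⟩ <;> order

theorem single₃_sup_single₂_inf_single₁ (hw : o ≤ w) (hi : w ≤ i) :
    (single₃ hw ⊔ single₂ (hw.trans hi)) ⊓ single₁ (hw.trans hi) = single₁ hw := by
  apply Subtype.ext
  simp only [val_sup, val_inf, single₁, single₂, single₃, Prod.mk_sup_mk, Prod.mk_inf_mk,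
    tripleClosure, Prod.mk.injEq]
  refine ⟨?_, ?_, ?_⟩ <;> order

theorem single₁_sup_single₂_inf_single₃ (hw : o ≤ w) (hi : w ≤ i) :
    (single₁ hw ⊔ single₂ (hw.trans hi)) ⊓ single₃ (hw.trans hi) = single₃ hw := by
  apply Subtype.ext
  simp only [val_sup, val_inf, single₁, single₂, single₃, Prod.mk_sup_mk, Prod.mk_inf_mk,
    tripleClosure, Prod.mk.injEq]
  refine ⟨?_, ?_, ?_⟩ <;> order

theorem inf_single₁ {u : BooleanTriple L} (hu : (o, o, o) ≤ u.val) (hi : u.val.1 ≤ i) :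
    u ⊓ single₁ (hu.1.trans hi) = single₁ hu.1 := by
  obtain ⟨⟨x, y, z⟩, _⟩ := u
  obtain ⟨hx, hy, hz⟩ := hu
  apply Subtype.ext
  simp only [val_inf, single₁, Prod.mk_inf_mk, Prod.mk.injEq]
  refine ⟨?_, ?_, ?_⟩ <;> order

theorem inf_single₂ {u : BooleanTriple L} (hu : (o, o, o) ≤ u.val) (hi : u.val.2.1 ≤ i) :
    u ⊓ single₂ (hu.2.1.trans hi) = single₂ hu.2.1 := by
  obtain ⟨⟨x, y, z⟩, _⟩ := u
  obtain ⟨hx, hy, hz⟩ := hu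
  apply Subtype.ext
  simp only [val_inf, single₂, Prod.mk_inf_mk, Prod.mk.injEq]
  refine ⟨?_, ?_, ?_⟩ <;> order

theorem inf_single₃ {u : BooleanTriple L} (hu : (o, o, o) ≤ u.val) (hi : u.val.2.2 ≤ i) :
    u ⊓ single₃ (hu.2.2.trans hi) = single₃ hu.2.2 := by
  obtain ⟨⟨x, y, z⟩, _⟩ := u
  obtain ⟨hx, hy, hz⟩ := hu
  apply Subtype.ext
  simp only [val_inf, single₃, Prod.mk_inf_mk, Prod.mk.injEq]
  refine ⟨?_, ?_, ?_⟩ <;> order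

theorem single₁_sup_single₂_sup_single₃ (u : BooleanTriple L) (hu : (o, o, o) ≤ u.val) :
    single₁ hu.1 ⊔ single₂ hu.2.1 ⊔ single₃ hu.2.2 = u := by
  obtain ⟨⟨x, y, z⟩, hxyz⟩ := u
  obtain ⟨hx, hy, hz⟩ := hu
  simp only [IsBooleanTriple, tripleClosure, Prod.mk.injEq] at hxyz
  obtain ⟨h₁, h₂, h₃⟩ := hxyz
  apply Subtype.ext
  simp only [val_sup, single₁, single₂, single₃, Prod.mk_sup_mk, tripleClosure, Prod.mk.injEq]
  refine ⟨?_, ?_, ?_⟩ <;> order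

variable {Φ : BooleanTriple L → BooleanTriple L → Prop}

theorem _root_.IsLatticeCongruence.single₁_iff_embed (hΦ : IsLatticeCongruence Φ)
    (ha : o ≤ a) (hx : o ≤ x) (hy : o ≤ y) :
    Φ (single₁ hx) (single₁ hy) ↔ Φ (embed a x) (embed a y) := by
  have hxi : x ≤ x ⊔ y := le_sup_left
  have hyi : y ≤ x ⊔ y := le_sup_right
  refine ⟨fun h => ?_, fun h => ?_⟩
  · simpa only [single₁_sup_single₂ _ ha] using hΦ.sup_right h (single₂ ha)
  · simpa only [embed_inf_single₁ hx ha hxi, embed_inf_single₁ hy ha hyi]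
      using hΦ.inf_right h (single₁ (hx.trans hxi))

theorem _root_.IsLatticeCongruence.single₂_iff_single₁ (hΦ : IsLatticeCongruence Φ)
    (hx : o ≤ x) (hy : o ≤ y) :
    Φ (single₂ hx) (single₂ hy) ↔ Φ (single₁ hx) (single₁ hy) := by
  have hxi : x ≤ x ⊔ y := le_sup_left
  have hyi : y ≤ x ⊔ y := le_sup_right
  have hoi := hx.trans hxi
  refine ⟨fun h => ?_, fun h => ?_⟩
  · simpa only [single₂_sup_single₃_inf_single₁ hx hxi,
      single₂_sup_single₃_inf_single₁ hy hyi]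
      using hΦ.inf_right (hΦ.sup_right h (single₃ hoi)) (single₁ hoi)
  · simpa only [single₁_sup_single₃_inf_single₂ hx hxi,
      single₁_sup_single₃_inf_single₂ hy hyi]
      using hΦ.inf_right (hΦ.sup_right h (single₃ hoi)) (single₂ hoi)

theorem _root_.IsLatticeCongruence.single₃_iff_single₁ (hΦ : IsLatticeCongruence Φ)
    (hx : o ≤ x) (hy : o ≤ y) :
    Φ (single₃ hx) (single₃ hy) ↔ Φ (single₁ hx) (single₁ hy) := by
  have hxi : x ≤ x ⊔ y := le_sup_left
  have hyi : y ≤ x ⊔ y := le_sup_right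
  have hoi := hx.trans hxi
  refine ⟨fun h => ?_, fun h => ?_⟩
  · simpa only [single₃_sup_single₂_inf_single₁ hx hxi,
      single₃_sup_single₂_inf_single₁ hy hyi]
      using hΦ.inf_right (hΦ.sup_right h (single₂ hoi)) (single₁ hoi)
  · simpa only [single₁_sup_single₂_inf_single₃ hx hxi,
      single₁_sup_single₂_inf_single₃ hy hyi]
      using hΦ.inf_right (hΦ.sup_right h (single₂ hoi)) (single₃ hoi)

theorem _root_.IsLatticeCongruence.iff_singles (hΦ : IsLatticeCongruence Φ)
    {u v : BooleanTriple L} (hu : (o, o, o) ≤ u.val) (hv : (o, o, o) ≤ v.val) :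
    Φ u v ↔ Φ (single₁ hu.1) (single₁ hv.1) ∧ Φ (single₂ hu.2.1) (single₂ hv.2.1) ∧
      Φ (single₃ hu.2.2) (single₃ hv.2.2) := by
  refine ⟨fun h => ⟨?_, ?_, ?_⟩, fun ⟨h₁, h₂, h₃⟩ => ?_⟩
  · have hoi : o ≤ u.val.1 ⊔ v.val.1 := hu.1.trans le_sup_left
    simpa only [inf_single₁ hu le_sup_left, inf_single₁ hv le_sup_right]
      using hΦ.inf_right h (single₁ hoi)
  · have hoi : o ≤ u.val.2.1 ⊔ v.val.2.1 := hu.2.1.trans le_sup_left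
    simpa only [inf_single₂ hu le_sup_left, inf_single₂ hv le_sup_right]
      using hΦ.inf_right h (single₂ hoi)
  · have hoi : o ≤ u.val.2.2 ⊔ v.val.2.2 := hu.2.2.trans le_sup_left
    simpa only [inf_single₃ hu le_sup_left, inf_single₃ hv le_sup_right]
      using hΦ.inf_right h (single₃ hoi)
  · rw [← single₁_sup_single₂_sup_single₃ u hu,
      ← single₁_sup_single₂_sup_single₃ v hv]
    exact hΦ.sup (hΦ.sup h₁ h₂) h₃

theorem _root_.IsLatticeCongruence.eq_liftRel (hΦ : IsLatticeCongruence Φ) (a : L) :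
    Φ = liftRel (fun x y => Φ (embed a x) (embed a y)) := by
  funext u v
  set m := u.val ⊓ v.val
  obtain ⟨o, ho, ha⟩ : ∃ o : L, (o, o, o) ≤ m ∧ o ≤ a :=
    ⟨m.1 ⊓ m.2.1 ⊓ m.2.2 ⊓ a, ⟨by order, by order, by order⟩, inf_le_right⟩
  rw [hΦ.iff_singles (ho.trans inf_le_left) (ho.trans inf_le_right), hΦ.single₂_iff_single₁,
    hΦ.single₃_iff_single₁, hΦ.single₁_iff_embed ha, hΦ.single₁_iff_embed ha,
    hΦ.single₁_iff_embed ha]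
  rfl

end BooleanTriple

/-- Every lattice with more than one element has a proper congruence-preserving
extension. -/
theorem proper_congruence_preserving_extension (L : Type u) [Lattice L] [Nontrivial L] :
    ∃ (K : Type u) (_ : Lattice K) (f : L → K),
      Function.Injective f ∧
      (∀ x y : L, f (x ⊔ y) = f x ⊔ f y) ∧
      (∀ x y : L, f (x ⊓ y) = f x ⊓ f y) ∧
      ¬ Function.Surjective f ∧
      ∀ Θ : L → L → Prop, IsLatticeCongruence Θ →
        ∃! Φ : K → K → Prop,
          IsLatticeCongruence Φ ∧ ∀ x y : L, Φ (f x) (f y) ↔ Θ x y := by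
  obtain ⟨a⟩ : Nonempty L := inferInstance
  refine ⟨BooleanTriple L, inferInstance, BooleanTriple.embed a,
    BooleanTriple.embed_injective a, map_sup _, map_inf _, BooleanTriple.embed_not_surjective a,
    fun Θ hΘ => ?_⟩
  refine ⟨BooleanTriple.liftRel Θ,
    ⟨BooleanTriple.isLatticeCongruence_liftRel hΘ, BooleanTriple.liftRel_embed hΘ a⟩, ?_⟩
  rintro Φ ⟨hΦ, hrestrict⟩
  rw [hΦ.eq_liftRel a]
  simp only [hrestrict]
end

section
/- Let L be a lattice and let (x, y, z) ∈ L³ be a Boolean triple. Then x ⊓ y = y ⊓ z = z ⊓ x, and this common value equals the upper median (x ⊔ y) ⊓ (y ⊔ z) ⊓ (z ⊔ x). -/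
/-- A triple `(x, y, z)` in a lattice is *Boolean* if `x = (x ⊔ y) ⊓ (x ⊔ z)`,
`y = (y ⊔ x) ⊓ (y ⊔ z)`, and `z = (z ⊔ x) ⊓ (z ⊔ y)`. -/
def IsBoolean {L : Type*} [Lattice L] (t : L × L × L) : Prop :=
  t.1 = (t.1 ⊔ t.2.1) ⊓ (t.1 ⊔ t.2.2) ∧
  t.2.1 = (t.2.1 ⊔ t.1) ⊓ (t.2.1 ⊔ t.2.2) ∧
  t.2.2 = (t.2.2 ⊔ t.1) ⊓ (t.2.2 ⊔ t.2.1)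

theorem inf_eq_inf_sup_inf_sup_inf_sup {L : Type*} [Lattice L] {x y z : L}
    (hx : x = (x ⊔ y) ⊓ (x ⊔ z)) (hy : y = (y ⊔ z) ⊓ (y ⊔ x)) :
    x ⊓ y = (x ⊔ y) ⊓ (y ⊔ z) ⊓ (z ⊔ x) :=
  calc x ⊓ y = ((x ⊔ y) ⊓ (x ⊔ z)) ⊓ ((y ⊔ z) ⊓ (y ⊔ x)) := by rw [← hx, ← hy]
    _ = (x ⊔ y) ⊓ (y ⊔ z) ⊓ (z ⊔ x) := by rw [sup_comm y x, sup_comm x z]; ac_rfl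

/-- Every Boolean triple `(x, y, z)` satisfies `x ⊓ y = y ⊓ z = z ⊓ x`, and this
common value is the upper median `(x ⊔ y) ⊓ (y ⊔ z) ⊓ (z ⊔ x)`. -/
theorem IsBoolean.inf_eq {L : Type*} [Lattice L] {x y z : L}
    (h : IsBoolean ((x, y, z) : L × L × L)) :
    x ⊓ y = y ⊓ z ∧ y ⊓ z = z ⊓ x ∧
      x ⊓ y = (x ⊔ y) ⊓ (y ⊔ z) ⊓ (z ⊔ x) := by
  -- the three conditions, with the middle one reordered so that they are invariant under
  -- the rotation `x ↦ y ↦ z ↦ x`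
  obtain ⟨hx, hy, hz⟩ : x = (x ⊔ y) ⊓ (x ⊔ z) ∧ y = (y ⊔ z) ⊓ (y ⊔ x) ∧
      z = (z ⊔ x) ⊓ (z ⊔ y) := ⟨h.1, h.2.1.trans (inf_comm _ _), h.2.2⟩
  have hxy := inf_eq_inf_sup_inf_sup_inf_sup hx hy
  have hyz : y ⊓ z = (x ⊔ y) ⊓ (y ⊔ z) ⊓ (z ⊔ x) := by
    rw [inf_eq_inf_sup_inf_sup_inf_sup hy hz]; ac_rfl
  have hzx : z ⊓ x = (x ⊔ y) ⊓ (y ⊔ z) ⊓ (z ⊔ x) := by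
    rw [inf_eq_inf_sup_inf_sup_inf_sup hz hx]; ac_rfl
  exact ⟨hxy.trans hyz.symm, hyz.trans hzx.symm, hxy⟩
end

section
/- Let L be a lattice and (x, y, z) ∈ L³. Then the triple ((x ⊔ y) ⊓ (x ⊔ z), (y ⊔ x) ⊓ (y ⊔ z), (z ⊔ x) ⊓ (z ⊔ y)) is a Boolean triple, it dominates (x, y, z) componentwise, and it is the smallest such Boolean triple: every Boolean triple (x₂, y₂, z₂) with x ≤ x₂, y ≤ y₂, z ≤ z₂ satisfies (x ⊔ y) ⊓ (x ⊔ z) ≤ x₂, (y ⊔ x) ⊓ (y ⊔ z) ≤ y₂, and (z ⊔ x) ⊓ (z ⊔ y) ≤ z₂. -/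
section Lattice

variable {α : Type*} [Lattice α]

theorem le_sup_inf_sup (a b c : α) : a ≤ (a ⊔ b) ⊓ (a ⊔ c) :=
  le_inf le_sup_left le_sup_left

theorem sup_inf_sup_le_sup_inf_sup {a b c a' b' c' : α} (ha : a ≤ a') (hb : b ≤ b') (hc : c ≤ c') :
    (a ⊔ b) ⊓ (a ⊔ c) ≤ (a' ⊔ b') ⊓ (a' ⊔ c') :=
  inf_le_inf (sup_le_sup ha hb) (sup_le_sup ha hc)

theorem sup_inf_sup_eq_of_le {a b c A B C : α} (hA : a ≤ A) (hAb : A ≤ a ⊔ b) (hAc : A ≤ a ⊔ c)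
    (hB : b ≤ B) (hBa : B ≤ b ⊔ a) (hC : c ≤ C) (hCa : C ≤ c ⊔ a) :
    (A ⊔ B) ⊓ (A ⊔ C) = (a ⊔ b) ⊓ (a ⊔ c) := by
  have hAB : A ⊔ B = a ⊔ b :=
    le_antisymm (sup_le hAb (hBa.trans_eq (sup_comm b a))) (sup_le_sup hA hB)
  have hAC : A ⊔ C = a ⊔ c :=
    le_antisymm (sup_le hAc (hCa.trans_eq (sup_comm c a))) (sup_le_sup hA hC)
  rw [hAB, hAC]

end Lattice

/-- For every triple `(x, y, z)`, the triple
`((x ⊔ y) ⊓ (x ⊔ z), (y ⊔ x) ⊓ (y ⊔ z), (z ⊔ x) ⊓ (z ⊔ y))` is the smallest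
Boolean triple dominating `(x, y, z)` componentwise. -/
theorem smallest_boolean_closure {L : Type*} [Lattice L] (x y z : L) :
    IsBoolean (((x ⊔ y) ⊓ (x ⊔ z), (y ⊔ x) ⊓ (y ⊔ z), (z ⊔ x) ⊓ (z ⊔ y)) : L × L × L) ∧
    (x ≤ (x ⊔ y) ⊓ (x ⊔ z) ∧ y ≤ (y ⊔ x) ⊓ (y ⊔ z) ∧ z ≤ (z ⊔ x) ⊓ (z ⊔ y)) ∧
    ∀ x₂ y₂ z₂ : L, IsBoolean ((x₂, y₂, z₂) : L × L × L) →
      x ≤ x₂ → y ≤ y₂ → z ≤ z₂ →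
        (x ⊔ y) ⊓ (x ⊔ z) ≤ x₂ ∧ (y ⊔ x) ⊓ (y ⊔ z) ≤ y₂ ∧ (z ⊔ x) ⊓ (z ⊔ y) ≤ z₂ := by
  have hx := le_sup_inf_sup x y z
  have hy := le_sup_inf_sup y x z
  have hz := le_sup_inf_sup z x y
  refine ⟨⟨?_, ?_, ?_⟩, ⟨hx, hy, hz⟩, ?_⟩
  · exact (sup_inf_sup_eq_of_le hx inf_le_left inf_le_right hy inf_le_left hz inf_le_left).symm
  · exact (sup_inf_sup_eq_of_le hy inf_le_left inf_le_right hx inf_le_left hz inf_le_right).symm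
  · exact (sup_inf_sup_eq_of_le hz inf_le_left inf_le_right hx inf_le_right hy inf_le_right).symm
  · rintro x₂ y₂ z₂ ⟨hx₂, hy₂, hz₂⟩ hxx hyy hzz
    exact ⟨(sup_inf_sup_le_sup_inf_sup hxx hyy hzz).trans_eq hx₂.symm,
      (sup_inf_sup_le_sup_inf_sup hyy hxx hzz).trans_eq hy₂.symm,
      (sup_inf_sup_le_sup_inf_sup hzz hxx hyy).trans_eq hz₂.symm⟩
end

section
/- Let L be a lattice. The set M̂(L) of Boolean triples of L, ordered componentwise, is a lattice in which the meet of two Boolean triples (x₀,y₀,z₀) and (x₁,y₁,z₁) is the componentwise meet (x₀ ⊓ x₁, y₀ ⊓ y₁, z₀ ⊓ z₁) (which is again Boolean), and the join is the Boolean closure of the componentwise join, i.e., the closure of (x₀ ⊔ x₁, y₀ ⊔ y₁, z₀ ⊔ z₁) is the least Boolean triple that is an upper bound of both. -/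
/-- The Boolean closure of a triple. -/
def bClosure {L : Type*} [Lattice L] (t : L × L × L) : L × L × L :=
  ((t.1 ⊔ t.2.1) ⊓ (t.1 ⊔ t.2.2),
   (t.2.1 ⊔ t.1) ⊓ (t.2.1 ⊔ t.2.2),
   (t.2.2 ⊔ t.1) ⊓ (t.2.2 ⊔ t.2.1))

variable {L : Type*} [Lattice L]

theorem isBoolean_of_rep (u v w : L) :
    IsBoolean ((u ⊓ v, u ⊓ w, v ⊓ w) : L × L × L) := by
  refine ⟨le_antisymm (le_inf le_sup_left le_sup_left) ?_,
          le_antisymm (le_inf le_sup_left le_sup_left) ?_,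
          le_antisymm (le_inf le_sup_left le_sup_left) ?_⟩
  · exact inf_le_inf (sup_le inf_le_left inf_le_left) (sup_le inf_le_right inf_le_left)
  · exact inf_le_inf (sup_le inf_le_left inf_le_left) (sup_le inf_le_right inf_le_right)
  · exact inf_le_inf (sup_le inf_le_left inf_le_right) (sup_le inf_le_right inf_le_right)

theorem isBoolean_iff_rep (t : L × L × L) :
    IsBoolean t ↔ ∃ u v w : L, t.1 = u ⊓ v ∧ t.2.1 = u ⊓ w ∧ t.2.2 = v ⊓ w := by
  constructor
  · rintro ⟨h1, h2, h3⟩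
    refine ⟨t.1 ⊔ t.2.1, t.1 ⊔ t.2.2, t.2.1 ⊔ t.2.2, h1, ?_, ?_⟩
    · conv_lhs => rw [h2]
      rw [sup_comm t.2.1 t.1]
    · conv_lhs => rw [h3]
      rw [sup_comm t.2.2 t.1, sup_comm t.2.2 t.2.1]
  · rintro ⟨u, v, w, h1, h2, h3⟩
    obtain ⟨a, b, c⟩ := t
    simp only at h1 h2 h3
    subst h1 h2 h3
    exact isBoolean_of_rep u v w

theorem bClosure_isBoolean (t : L × L × L) : IsBoolean (bClosure t) := by
  rw [isBoolean_iff_rep]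
  refine ⟨t.1 ⊔ t.2.1, t.1 ⊔ t.2.2, t.2.1 ⊔ t.2.2, rfl, ?_, ?_⟩
  · show (t.2.1 ⊔ t.1) ⊓ (t.2.1 ⊔ t.2.2) = _
    rw [sup_comm t.2.1 t.1]
  · show (t.2.2 ⊔ t.1) ⊓ (t.2.2 ⊔ t.2.1) = _
    rw [sup_comm t.2.2 t.1, sup_comm t.2.2 t.2.1]

theorem IsBoolean.inf {a b : L × L × L} (ha : IsBoolean a) (hb : IsBoolean b) :
    IsBoolean (a ⊓ b) := by
  rw [isBoolean_iff_rep] at ha hb ⊢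
  obtain ⟨u, v, w, h1, h2, h3⟩ := ha
  obtain ⟨u', v', w', h1', h2', h3'⟩ := hb
  refine ⟨u ⊓ u', v ⊓ v', w ⊓ w', ?_, ?_, ?_⟩
  · show a.1 ⊓ b.1 = _
    rw [h1, h1', inf_inf_inf_comm]
  · show a.2.1 ⊓ b.2.1 = _
    rw [h2, h2', inf_inf_inf_comm]
  · show a.2.2 ⊓ b.2.2 = _
    rw [h3, h3', inf_inf_inf_comm]

theorem le_bClosure (t : L × L × L) : t ≤ bClosure t :=
  ⟨le_inf le_sup_left le_sup_left, le_inf le_sup_left le_sup_left,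
   le_inf le_sup_left le_sup_left⟩

theorem bClosure_le {t c : L × L × L} (hc : IsBoolean c) (h : t ≤ c) :
    bClosure t ≤ c := by
  obtain ⟨h1, h2, h3⟩ := h
  refine ⟨?_, ?_, ?_⟩
  · rw [hc.1]; exact inf_le_inf (sup_le_sup h1 h2) (sup_le_sup h1 h3)
  · rw [hc.2.1]; exact inf_le_inf (sup_le_sup h2 h1) (sup_le_sup h2 h3)
  · rw [hc.2.2]; exact inf_le_inf (sup_le_sup h3 h1) (sup_le_sup h3 h2)

/-- The lattice `M̂(L)` of Boolean triples of `L`, ordered componentwise. -/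
def BoolTriple (L : Type*) [Lattice L] := {t : L × L × L // IsBoolean t}

instance : PartialOrder (BoolTriple L) := Subtype.partialOrder _

instance : Lattice (BoolTriple L) where
  sup a b := ⟨bClosure (a.1 ⊔ b.1), bClosure_isBoolean _⟩
  le_sup_left a b := show a.1 ≤ bClosure (a.1 ⊔ b.1) from le_trans le_sup_left (le_bClosure _)
  le_sup_right a b := show b.1 ≤ bClosure (a.1 ⊔ b.1) from le_trans le_sup_right (le_bClosure _)
  sup_le a b c hac hbc := show bClosure (a.1 ⊔ b.1) ≤ c.1 from bClosure_le c.2 (sup_le hac hbc)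
  inf a b := ⟨a.1 ⊓ b.1, a.2.inf b.2⟩
  inf_le_left a b := show a.1 ⊓ b.1 ≤ a.1 from inf_le_left
  inf_le_right a b := show a.1 ⊓ b.1 ≤ b.1 from inf_le_right
  le_inf a b c hab hac := show a.1 ≤ b.1 ⊓ c.1 from le_inf hab hac

/-- `M̂(L)`, the poset of Boolean triples ordered componentwise, is a lattice in
which meets are componentwise and the join of two Boolean triples is the Boolean
closure of their componentwise join, this closure being the least Boolean upper
bound. -/
theorem boolTriple_lattice_ops (a b : BoolTriple L) :
    IsBoolean (a.1 ⊓ b.1) ∧ (a ⊓ b).1 = a.1 ⊓ b.1 ∧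
    IsBoolean (bClosure (a.1 ⊔ b.1)) ∧ (a ⊔ b).1 = bClosure (a.1 ⊔ b.1) ∧
    IsGLB {a, b} (a ⊓ b) ∧ IsLUB {a, b} (a ⊔ b) :=
  ⟨a.2.inf b.2, rfl, bClosure_isBoolean _, rfl, isGLB_pair, isLUB_pair⟩
end

section
/- Let L be a lattice with a least element 0. For every x ∈ L the triple (x, 0, 0) is Boolean; for x, y ∈ L the componentwise meet of (x,0,0) and (y,0,0) is (x ⊓ y, 0, 0), and the Boolean closure of their componentwise join is (x ⊔ y, 0, 0). Consequently x ↦ (x, 0, 0) is a lattice embedding of L into the lattice M̂(L) of Boolean triples. -/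
variable {L : Type*} [Lattice L]

theorem isBoolean_bot_bot {L : Type*} [Lattice L] [OrderBot L] (x : L) :
    IsBoolean ((x, ⊥, ⊥) : L × L × L) := by
  refine ⟨by simp, by simp, by simp⟩

/-- The map `x ↦ (x, ⊥, ⊥)` from `L` into the lattice of Boolean triples. -/
def botEmbed {L : Type*} [Lattice L] [OrderBot L] (x : L) : BoolTriple L :=
  ⟨(x, ⊥, ⊥), isBoolean_bot_bot x⟩

theorem IsBoolean.bClosure_eq {t : L × L × L} (ht : IsBoolean t) : bClosure t = t :=
  le_antisymm (bClosure_le ht le_rfl) (le_bClosure t)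

namespace BoolTriple

theorem coe_inf (a b : BoolTriple L) : (a ⊓ b).1 = a.1 ⊓ b.1 := rfl

theorem coe_sup (a b : BoolTriple L) : (a ⊔ b).1 = bClosure (a.1 ⊔ b.1) := rfl

end BoolTriple

section OrderBot

variable [OrderBot L]

theorem mk_bot_bot_inf (x y : L) :
    ((x, ⊥, ⊥) : L × L × L) ⊓ (y, ⊥, ⊥) = (x ⊓ y, ⊥, ⊥) := by
  rw [Prod.mk_inf_mk, Prod.mk_inf_mk, inf_idem]

theorem bClosure_mk_bot_bot_sup (x y : L) :
    bClosure (((x, ⊥, ⊥) : L × L × L) ⊔ (y, ⊥, ⊥)) = (x ⊔ y, ⊥, ⊥) := by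
  rw [Prod.mk_sup_mk, Prod.mk_sup_mk, bot_sup_eq]
  exact (isBoolean_bot_bot (x ⊔ y)).bClosure_eq

theorem coe_botEmbed (x : L) : (botEmbed x).1 = (x, ⊥, ⊥) := rfl

theorem botEmbed_injective : Function.Injective (botEmbed (L := L)) := fun _ _ h =>
  congrArg (fun t : BoolTriple L => t.1.1) h

theorem botEmbed_inf (x y : L) : botEmbed (x ⊓ y) = botEmbed x ⊓ botEmbed y := by
  apply Subtype.ext
  rw [BoolTriple.coe_inf, coe_botEmbed, coe_botEmbed, coe_botEmbed, mk_bot_bot_inf]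

theorem botEmbed_sup (x y : L) : botEmbed (x ⊔ y) = botEmbed x ⊔ botEmbed y := by
  apply Subtype.ext
  rw [BoolTriple.coe_sup, coe_botEmbed, coe_botEmbed, coe_botEmbed, bClosure_mk_bot_bot_sup]

end OrderBot

/-- For a lattice with least element `0`, each `(x, 0, 0)` is Boolean, the
componentwise meet of `(x,0,0)` and `(y,0,0)` is `(x ⊓ y, 0, 0)`, the Boolean
closure of their componentwise join is `(x ⊔ y, 0, 0)`, and hence `x ↦ (x,0,0)`
is a lattice embedding of `L` into `M̂(L)`. -/
theorem botEmbed_is_lattice_embedding (L : Type*) [Lattice L] [OrderBot L] :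
    (∀ x : L, IsBoolean ((x, ⊥, ⊥) : L × L × L)) ∧
    (∀ x y : L, (((x, ⊥, ⊥) : L × L × L) ⊓ (y, ⊥, ⊥)) = ((x ⊓ y, ⊥, ⊥) : L × L × L)) ∧
    (∀ x y : L, bClosure (((x, ⊥, ⊥) : L × L × L) ⊔ (y, ⊥, ⊥)) = ((x ⊔ y, ⊥, ⊥) : L × L × L)) ∧
    Function.Injective (botEmbed (L := L)) ∧
    (∀ x y : L, botEmbed (x ⊓ y) = botEmbed x ⊓ botEmbed y) ∧
    (∀ x y : L, botEmbed (x ⊔ y) = botEmbed x ⊔ botEmbed y) :=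
  ⟨isBoolean_bot_bot, mk_bot_bot_inf, bClosure_mk_bot_bot_sup,
    botEmbed_injective, botEmbed_inf, botEmbed_sup⟩
end

section
/- Let L be a lattice containing elements o, a, b, c, i that form a sublattice isomorphic to M₃ (i.e., a, b, c are pairwise distinct, the meet of any two distinct elements of {a,b,c} is o, and the join of any two distinct elements of {a,b,c} is i, with o < a, b, c < i). Then the five triples (o,o,a), (o,c,a), (c,c,i), (i,i,i), (b,o,a) are Boolean triples and they form a sublattice of M̂(L) isomorphic to N₅: (o,o,a) < (o,c,a) < (c,c,i) < (i,i,i), (o,o,a) < (b,o,a) < (i,i,i), the componentwise meet of (c,c,i) and (b,o,a) is (o,o,a), and the join in M̂(L) of (o,c,a) and (b,o,a) is (i,i,i). -/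
/-! Each of the five triples has one coordinate equal to the meet of the other two, which makes it
Boolean by absorption. The join `(o, c, a) ⊔ (b, o, a) = (b, c, a)` has all pairwise joins equal
to `i`, so its Boolean closure is `(i, i, i)`. -/

section

variable {L : Type*} [Lattice L]

theorem isBoolean_of_fst_eq_inf {x y z : L} (h : x = y ⊓ z) : IsBoolean (x, y, z) := by
  subst h
  refine ⟨?_, ?_, ?_⟩ <;> dsimp only
  · rw [sup_of_le_right inf_le_left, sup_of_le_right inf_le_right]
  · rw [sup_of_le_left inf_le_left, inf_sup_self]
  · rw [sup_of_le_left inf_le_right]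
    exact inf_sup_self.symm

theorem isBoolean_of_snd_eq_inf {x y z : L} (h : y = x ⊓ z) : IsBoolean (x, y, z) := by
  subst h
  refine ⟨?_, ?_, ?_⟩ <;> dsimp only
  · rw [sup_of_le_left (inf_le_left : x ⊓ z ≤ x), inf_sup_self]
  · rw [sup_of_le_right inf_le_left, sup_of_le_right inf_le_right]
  · rw [sup_of_le_left (inf_le_right : x ⊓ z ≤ z)]
    exact (inf_eq_right.2 le_sup_left).symm

theorem bClosure_eq_of_sup_eq {x y z t : L} (hxy : x ⊔ y = t) (hxz : x ⊔ z = t)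
    (hyz : y ⊔ z = t) : bClosure (x, y, z) = (t, t, t) := by
  simp only [bClosure, sup_comm y x, sup_comm z x, sup_comm z y, hxy, hxz, hyz, inf_idem]

end

theorem N5_in_boolTriples_of_M3_general {L : Type*} [Lattice L] (o a b c i : L)
    (hmab : a ⊓ b = o) (hmac : a ⊓ c = o) (hmbc : b ⊓ c = o)
    (hjab : a ⊔ b = i) (hjac : a ⊔ c = i) (hjbc : b ⊔ c = i)
    (hoa : o < a) (hob : o < b) (hoc : o < c)
    (hai : a < i) (hbi : b < i) (hci : c < i) :
    IsBoolean ((o, o, a) : L × L × L) ∧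
    IsBoolean ((o, c, a) : L × L × L) ∧
    IsBoolean ((c, c, i) : L × L × L) ∧
    IsBoolean ((i, i, i) : L × L × L) ∧
    IsBoolean ((b, o, a) : L × L × L) ∧
    (((o, o, a) : L × L × L) < (o, c, a)) ∧
    (((o, c, a) : L × L × L) < (c, c, i)) ∧
    (((c, c, i) : L × L × L) < (i, i, i)) ∧
    (((o, o, a) : L × L × L) < (b, o, a)) ∧
    (((b, o, a) : L × L × L) < (i, i, i)) ∧
    (((c, c, i) : L × L × L) ⊓ (b, o, a) = (o, o, a)) ∧
    (bClosure (((o, c, a) : L × L × L) ⊔ (b, o, a)) = (i, i, i)) := by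
  have hoi : o ≤ i := hoa.le.trans hai.le
  refine ⟨isBoolean_of_fst_eq_inf (inf_eq_left.2 hoa.le).symm,
    isBoolean_of_fst_eq_inf ((inf_comm c a).trans hmac).symm,
    isBoolean_of_fst_eq_inf (inf_eq_left.2 hci.le).symm,
    isBoolean_of_fst_eq_inf (inf_idem i).symm,
    isBoolean_of_snd_eq_inf ((inf_comm b a).trans hmab).symm,
    Prod.mk_lt_mk_of_le_of_lt le_rfl (Prod.mk_lt_mk_of_lt_of_le hoc le_rfl),
    Prod.mk_lt_mk_of_lt_of_le hoc ⟨le_rfl, hai.le⟩,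
    Prod.mk_lt_mk_of_lt_of_le hci ⟨hci.le, le_rfl⟩,
    Prod.mk_lt_mk_of_lt_of_le hob le_rfl,
    Prod.mk_lt_mk_of_lt_of_le hbi ⟨hoi, hai.le⟩, ?_, ?_⟩
  · change (c ⊓ b, c ⊓ o, i ⊓ a) = (o, o, a)
    rw [inf_comm, hmbc, inf_eq_right.2 hoc.le, inf_eq_right.2 hai.le]
  · change bClosure (o ⊔ b, c ⊔ o, a ⊔ a) = (i, i, i)
    rw [sup_eq_right.2 hob.le, sup_eq_left.2 hoc.le, sup_idem]
    exact bClosure_eq_of_sup_eq hjbc (sup_comm b a ▸ hjab) (sup_comm c a ▸ hjac)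

/-- If `o, a, b, c, i` form a copy of `M₃` in `L`, then the triples `(o,o,a)`,
`(o,c,a)`, `(c,c,i)`, `(i,i,i)`, `(b,o,a)` are Boolean and form a copy of `N₅`
in `M̂(L)`. -/
theorem N5_in_boolTriples_of_M3 {L : Type*} [Lattice L] (o a b c i : L)
    (hab : a ≠ b) (hac : a ≠ c) (hbc : b ≠ c)
    (hmab : a ⊓ b = o) (hmac : a ⊓ c = o) (hmbc : b ⊓ c = o)
    (hjab : a ⊔ b = i) (hjac : a ⊔ c = i) (hjbc : b ⊔ c = i)
    (hoa : o < a) (hob : o < b) (hoc : o < c)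
    (hai : a < i) (hbi : b < i) (hci : c < i) :
    IsBoolean ((o, o, a) : L × L × L) ∧
    IsBoolean ((o, c, a) : L × L × L) ∧
    IsBoolean ((c, c, i) : L × L × L) ∧
    IsBoolean ((i, i, i) : L × L × L) ∧
    IsBoolean ((b, o, a) : L × L × L) ∧
    (((o, o, a) : L × L × L) < (o, c, a)) ∧
    (((o, c, a) : L × L × L) < (c, c, i)) ∧
    (((c, c, i) : L × L × L) < (i, i, i)) ∧
    (((o, o, a) : L × L × L) < (b, o, a)) ∧
    (((b, o, a) : L × L × L) < (i, i, i)) ∧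
    (((c, c, i) : L × L × L) ⊓ (b, o, a) = (o, o, a)) ∧
    (bClosure (((o, c, a) : L × L × L) ⊔ (b, o, a)) = (i, i, i)) :=
  N5_in_boolTriples_of_M3_general o a b c i hmab hmac hmbc hjab hjac hjbc hoa hob hoc hai hbi hci
end

section
/- Let D be a distributive lattice. A triple (x, y, z) ∈ D³ satisfies x ⊓ y = y ⊓ z = z ⊓ x if and only if it is a Boolean triple. Consequently, for distributive D the poset M₃[D] of triples satisfying x ⊓ y = y ⊓ z = z ⊓ x coincides with the lattice M̂(D) of Boolean triples. -/
theorem inf_eq_inf_and_inf_eq_inf_iff_inf_le {α : Type*} [SemilatticeInf α] (x y z : α) :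
    (x ⊓ y = y ⊓ z ∧ y ⊓ z = z ⊓ x) ↔ (y ⊓ z ≤ x ∧ x ⊓ z ≤ y ∧ x ⊓ y ≤ z) := by
  constructor
  · rintro ⟨hxy, hyz⟩
    refine ⟨hxy ▸ inf_le_left, ?_, hxy ▸ inf_le_right⟩
    rw [inf_comm, ← hyz]
    exact inf_le_left
  · rintro ⟨hx, hy, hz⟩
    have hxy : x ⊓ y = y ⊓ z := le_antisymm (le_inf inf_le_right hz) (le_inf hx inf_le_left)
    have hzx : z ⊓ x = y ⊓ z :=
      le_antisymm (le_inf (inf_comm z x ▸ hy) inf_le_left) (le_inf inf_le_right hx)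
    exact ⟨hxy, hzx.symm⟩

theorem isBoolean_iff_inf_le {D : Type*} [DistribLattice D] (x y z : D) :
    IsBoolean ((x, y, z) : D × D × D) ↔ (y ⊓ z ≤ x ∧ x ⊓ z ≤ y ∧ x ⊓ y ≤ z) := by
  simp only [IsBoolean, ← sup_inf_left, left_eq_sup]

/-- In a distributive lattice, a triple satisfies `x ⊓ y = y ⊓ z = z ⊓ x` iff it
is Boolean; hence `M₃[D]` coincides with `M̂(D)` for distributive `D`. -/
theorem M3D_eq_boolTriples (D : Type*) [DistribLattice D] :
    (∀ x y z : D,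
      (x ⊓ y = y ⊓ z ∧ y ⊓ z = z ⊓ x) ↔ IsBoolean ((x, y, z) : D × D × D)) ∧
    {t : D × D × D | t.1 ⊓ t.2.1 = t.2.1 ⊓ t.2.2 ∧ t.2.1 ⊓ t.2.2 = t.2.2 ⊓ t.1} =
      {t : D × D × D | IsBoolean t} := by
  have h (x y z : D) :
      (x ⊓ y = y ⊓ z ∧ y ⊓ z = z ⊓ x) ↔ IsBoolean ((x, y, z) : D × D × D) :=
    (inf_eq_inf_and_inf_eq_inf_iff_inf_le x y z).trans (isBoolean_iff_inf_le x y z).symm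
  exact ⟨h, Set.ext fun ⟨x, y, z⟩ => h x y z⟩
end

section
/- Every Dedekind domain R with more than one element (i.e., nontrivial) has a proper ideal-preserving extension that is a principal ideal domain; that is, there exist a principal ideal domain S and an injective, non-surjective ring homomorphism f : R → S such that the map J ↦ f⁻¹(J) is a bijection from the set of ideals of S onto the set of ideals of R. -/
/-! The extension is the Nagata ring `R(X)`: the localization of `R[X]` at the polynomials whose
content ideal is `⊤`. Contracting an extended ideal recovers it, because `r u ∈ I[X]` with
`c(u) = ⊤` forces `r ∈ I`. In a Dedekind domain the content `c(g)` of `g ≠ 0` is invertible, say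
`c(g) * J = (d)`; the polynomials `b g / d` for `b ∈ J` have contents summing to `⊤`, and
interleaving finitely many of them gives `u` of unit content with `u * c(g) ⊆ (g)`. Hence
`g R(X) = c(g) R(X)`, so every ideal of `R(X)` is extended from `R`, and it is principal because
every finitely generated ideal of `R` is the content of a polynomial. -/

open Polynomial Ideal

namespace Polynomial

section CommSemiring

variable {R : Type*} [CommSemiring R]

theorem contentIdeal_le_iff {p : R[X]} {I : Ideal R} :
    p.contentIdeal ≤ I ↔ ∀ n, p.coeff n ∈ I := by
  refine ⟨fun h n ↦ h (coeff_mem_contentIdeal p n), fun h ↦ span_le.mpr fun x hx ↦ ?_⟩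
  obtain ⟨n, -, rfl⟩ := mem_coeffs_iff.mp hx
  exact h n

theorem mem_map_C_iff_contentIdeal_le {p : R[X]} {I : Ideal R} :
    p ∈ I.map C ↔ p.contentIdeal ≤ I := by
  rw [mem_map_C_iff, contentIdeal_le_iff]

theorem contentIdeal_C_mul (r : R) (p : R[X]) :
    (C r * p).contentIdeal = span {r} * p.contentIdeal := by
  refine le_antisymm (contentIdeal_C r ▸ contentIdeal_mul_le_mul_contentIdeal _ _) ?_
  refine span_singleton_mul_le_iff.mpr fun z hz ↦ ?_
  suffices p.contentIdeal ≤ (C r * p).contentIdeal.colon {r} by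
    simpa [mul_comm] using this hz
  refine contentIdeal_le_iff.mpr fun n ↦ ?_
  simpa [coeff_C_mul, mul_comm] using coeff_mem_contentIdeal (C r * p) n

theorem contentIdeal_add_mul_X_pow {p : R[X]} {k : ℕ} (hp : p.natDegree < k) (q : R[X]) :
    (p + q * X ^ k).contentIdeal = p.contentIdeal ⊔ q.contentIdeal := by
  refine le_antisymm (contentIdeal_le_iff.mpr fun n ↦ ?_) (sup_le ?_ ?_)
  · rw [coeff_add, coeff_mul_X_pow']
    refine add_mem (mem_sup_left (coeff_mem_contentIdeal p n)) ?_
    split_ifs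
    exacts [mem_sup_right (coeff_mem_contentIdeal q _), zero_mem _]
  · refine contentIdeal_le_iff.mpr fun n ↦ ?_
    rcases lt_or_ge n k with hn | hn
    · have := coeff_mem_contentIdeal (p + q * X ^ k) n
      rwa [coeff_add, coeff_mul_X_pow', if_neg (not_le.mpr hn), add_zero] at this
    · simp [coeff_eq_zero_of_natDegree_lt (hp.trans_le hn)]
  · refine contentIdeal_le_iff.mpr fun n ↦ ?_
    have := coeff_mem_contentIdeal (p + q * X ^ k) (n + k)
    rwa [coeff_add, coeff_mul_X_pow,
      coeff_eq_zero_of_natDegree_lt (hp.trans_le (Nat.le_add_left k n)), zero_add] at this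

theorem exists_contentIdeal_eq_span (s : Finset R) : ∃ p : R[X], p.contentIdeal = span s := by
  classical
  induction s using Finset.induction_on with
  | empty => exact ⟨0, by simp⟩
  | insert a s _ ih =>
    obtain ⟨p, hp⟩ := ih
    refine ⟨C a + p * X ^ 1, ?_⟩
    rw [contentIdeal_add_mul_X_pow (by simp), hp, Finset.coe_insert, span_insert, contentIdeal_C]

theorem exists_contentIdeal_eq {I : Ideal R} (hI : I.FG) : ∃ p : R[X], p.contentIdeal = I := by
  obtain ⟨s, rfl⟩ := hI
  exact exists_contentIdeal_eq_span s

-- The contents of elements of `T` form a directed family, since `p + q * X ^ (p.natDegree + 1)`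
-- has content `c(p) ⊔ c(q)`; and `⊤` is a compact element.
theorem exists_mem_contentIdeal_eq_top {T : Ideal R[X]} (hT : ⨆ p ∈ T, p.contentIdeal = ⊤) :
    ∃ u ∈ T, u.contentIdeal = ⊤ := by
  have hdir : DirectedOn (· ≤ ·) (contentIdeal '' (T : Set R[X])) := by
    rintro _ ⟨p, hp, rfl⟩ _ ⟨q, hq, rfl⟩
    refine ⟨_, ⟨p + q * X ^ (p.natDegree + 1), add_mem hp (T.mul_mem_right _ hq), rfl⟩, ?_⟩
    rw [contentIdeal_add_mul_X_pow (Nat.lt_succ_self _)]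
    exact ⟨le_sup_left, le_sup_right⟩
  obtain ⟨_, ⟨u, hu, rfl⟩, htop⟩ :=
    (CompleteLattice.isCompactElement_iff_le_of_directed_sSup_le _ _).mp isCompactElement_top _
      ⟨_, Set.mem_image_of_mem _ T.zero_mem⟩ hdir (by rw [sSup_image]; exact hT.ge)
  exact ⟨u, hu, top_le_iff.mp htop⟩

end CommSemiring

theorem exists_mem_colon_contentIdeal_eq_top {R : Type*} [CommRing R] [IsDomain R] {g : R[X]}
    {J : Ideal R} {d : R} (hd : d ≠ 0) (hgJ : g.contentIdeal * J = span {d}) :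
    ∃ u ∈ (span {g}).colon (C '' (g.contentIdeal : Set R)), u.contentIdeal = ⊤ := by
  refine exists_mem_contentIdeal_eq_top (top_le_iff.mp ((span_singleton_mul_right_mono hd).mp ?_))
  rw [mul_top]
  conv_lhs => rw [← hgJ]
  refine mul_le.mpr fun a ha b hb ↦ ?_
  obtain ⟨q, hq⟩ : C d ∣ C b * g := (C_dvd_iff_dvd_coeff _ _).mpr fun i ↦ by
    rw [coeff_C_mul, mul_comm, ← mem_span_singleton, ← hgJ]
    exact mul_mem_mul (coeff_mem_contentIdeal g i) hb
  have hq_colon : q ∈ (span {g}).colon (C '' (g.contentIdeal : Set R)) := by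
    refine Submodule.mem_colon.mpr ?_
    rintro _ ⟨a', ha', rfl⟩
    obtain ⟨t, ht⟩ := mem_span_singleton.mp (hgJ ▸ mul_mem_mul ha' hb)
    have hCt : C a' * C b = C d * C t := by rw [← C_mul, ht, C_mul]
    have : q * C a' = g * C t := mul_left_cancel₀ (C_ne_zero.mpr hd) <| by
      linear_combination (-C a') * hq + g * hCt
    rw [smul_eq_mul, this]
    exact mem_span_singleton.mpr (dvd_mul_right g _)
  have hab : a * b ∈ span {d} * q.contentIdeal := by
    rw [← contentIdeal_C_mul, ← hq, contentIdeal_C_mul, mul_comm a b]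
    exact mul_mem_mul (mem_span_singleton_self b) ha
  exact mul_mono_right (le_iSup₂_of_le q hq_colon le_rfl) hab

section NagataRing

variable (R : Type*) [CommRing R]

def nagataSubmonoid : Submonoid R[X] where
  carrier := {p | p.contentIdeal = ⊤}
  mul_mem' := contentIdeal_mul_eq_top_of_contentIdeal_eq_top
  one_mem' := contentIdeal_one

abbrev NagataRing : Type _ := Localization (nagataSubmonoid R)

variable {R}

@[simp]
theorem mem_nagataSubmonoid {p : R[X]} : p ∈ nagataSubmonoid R ↔ p.contentIdeal = ⊤ := Iff.rfl

end NagataRing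

namespace NagataRing

variable {R : Type*} [CommRing R]

theorem comap_map_algebraMap (I : Ideal R) :
    (I.map (algebraMap R (NagataRing R))).comap (algebraMap R (NagataRing R)) = I := by
  refine le_antisymm (fun r hr ↦ ?_) le_comap_map
  rw [mem_comap, IsScalarTower.algebraMap_eq R R[X], ← Ideal.map_map, RingHom.comp_apply,
    algebraMap_eq, IsLocalization.mem_map_algebraMap_iff (nagataSubmonoid R)] at hr
  obtain ⟨⟨⟨y, hy⟩, u⟩, h⟩ := hr
  rw [← map_mul, IsLocalization.eq_iff_exists (nagataSubmonoid R)] at h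
  obtain ⟨c, hc⟩ := h
  have hmem : C r * ↑(c * u) ∈ I.map C := by
    rw [Submonoid.coe_mul, mul_left_comm, hc]
    exact mul_mem_left _ _ hy
  rwa [mem_map_C_iff_contentIdeal_le, contentIdeal_C_mul, (c * u).2, mul_top,
    span_singleton_le_iff_mem] at hmem

section IsDomain

variable [IsDomain R]

theorem nagataSubmonoid_le_nonZeroDivisors : nagataSubmonoid R ≤ nonZeroDivisors R[X] :=
  fun p hp ↦ mem_nonZeroDivisors_of_ne_zero (by rintro rfl; simp at hp)

instance : IsDomain (NagataRing R) :=
  IsLocalization.isDomain_localization nagataSubmonoid_le_nonZeroDivisors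

theorem algebraMap_polynomial_injective : Function.Injective (algebraMap R[X] (NagataRing R)) :=
  IsLocalization.injective _ nagataSubmonoid_le_nonZeroDivisors

theorem algebraMap_injective : Function.Injective (algebraMap R (NagataRing R)) := by
  rw [IsScalarTower.algebraMap_eq R R[X], algebraMap_eq, RingHom.coe_comp]
  exact algebraMap_polynomial_injective.comp C_injective

theorem algebraMap_not_surjective : ¬ Function.Surjective (algebraMap R (NagataRing R)) := by
  intro h
  obtain ⟨r, hr⟩ := h (algebraMap R[X] _ X)
  rw [IsScalarTower.algebraMap_apply R R[X], algebraMap_eq] at hr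
  exact X_ne_C r (algebraMap_polynomial_injective hr).symm

end IsDomain

section IsDedekindDomain

variable [IsDedekindDomain R]

theorem span_algebraMap_eq_map_contentIdeal (g : R[X]) :
    span {algebraMap R[X] (NagataRing R) g} = g.contentIdeal.map (algebraMap R (NagataRing R)) := by
  rcases eq_or_ne g 0 with rfl | hg
  · simp
  obtain ⟨d, hd, hd0⟩ :=
    Submodule.exists_mem_ne_zero_of_ne_bot (mt (contentIdeal_eq_bot_iff g).mp hg)
  obtain ⟨J, hJ⟩ := Ideal.dvd_iff_le.mpr ((span_singleton_le_iff_mem _).mpr hd)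
  obtain ⟨u, hu, hu1⟩ := exists_mem_colon_contentIdeal_eq_top hd0 hJ.symm
  refine le_antisymm (span_le.mpr ?_) (map_le_iff_le_comap.mpr fun a ha ↦ ?_)
  · rw [Set.singleton_subset_iff, IsScalarTower.algebraMap_eq R R[X], ← Ideal.map_map,
      algebraMap_eq]
    exact mem_map_of_mem _ (mem_map_C_iff_contentIdeal_le.mpr le_rfl)
  · obtain ⟨h, hh⟩ := mem_span_singleton.mp (Submodule.mem_colon.mp hu _ ⟨a, ha, rfl⟩)
    have hunit : IsUnit (algebraMap R[X] (NagataRing R) u) :=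
      IsLocalization.map_units _ (⟨u, hu1⟩ : nagataSubmonoid R)
    rw [mem_comap, ← unit_mul_mem_iff_mem _ hunit, IsScalarTower.algebraMap_apply R R[X],
      algebraMap_eq, ← map_mul, ← smul_eq_mul, hh, map_mul]
    exact mul_mem_right _ _ (mem_span_singleton_self _)

theorem map_comap_algebraMap (J : Ideal (NagataRing R)) :
    (J.comap (algebraMap R (NagataRing R))).map (algebraMap R (NagataRing R)) = J := by
  refine le_antisymm map_comap_le ?_
  conv_lhs => rw [← IsLocalization.map_under (nagataSubmonoid R) (NagataRing R) J]
  refine map_le_iff_le_comap.mpr fun g hg ↦ mem_comap.mpr ?_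
  have hgJ : span {algebraMap R[X] (NagataRing R) g} ≤ J := (span_singleton_le_iff_mem _).mpr hg
  rw [span_algebraMap_eq_map_contentIdeal] at hgJ
  rw [← span_singleton_le_iff_mem, span_algebraMap_eq_map_contentIdeal]
  exact map_mono (map_le_iff_le_comap.mp hgJ)

instance : IsPrincipalIdealRing (NagataRing R) where
  principal J := by
    obtain ⟨g, hg⟩ :=
      exists_contentIdeal_eq (IsNoetherian.noetherian (J.comap (algebraMap R (NagataRing R))))
    refine ⟨algebraMap R[X] _ g, ?_⟩
    rw [submodule_span_eq, span_algebraMap_eq_map_contentIdeal, hg, map_comap_algebraMap]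

end IsDedekindDomain

end NagataRing

end Polynomial

universe u

theorem dedekind_domain_ideal_preserving_pid_extension_general
    (R : Type u) [CommRing R] [IsDedekindDomain R] :
    ∃ (S : Type u) (_ : CommRing S),
      IsDomain S ∧ IsPrincipalIdealRing S ∧
      ∃ f : R →+* S,
        Function.Injective ⇑f ∧
        ¬ Function.Surjective ⇑f ∧
        Function.Bijective (fun J : Ideal S => J.comap f) :=
  ⟨NagataRing R, inferInstance, inferInstance, inferInstance, algebraMap R (NagataRing R),
    NagataRing.algebraMap_injective, NagataRing.algebraMap_not_surjective,
    Function.bijective_iff_has_inverse.mpr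
      ⟨Ideal.map _, NagataRing.map_comap_algebraMap, NagataRing.comap_map_algebraMap⟩⟩

/-- Every (nontrivial) Dedekind domain `R` has a proper ideal-preserving
extension that is a principal ideal domain: there are a PID `S` and an
injective, non-surjective ring homomorphism `f : R → S` such that `J ↦ f⁻¹(J)`
is a bijection from the ideals of `S` onto the ideals of `R`. -/
theorem dedekind_domain_ideal_preserving_pid_extension
    (R : Type u) [CommRing R] [IsDomain R] [IsDedekindDomain R] :
    ∃ (S : Type u) (_ : CommRing S),
      IsDomain S ∧ IsPrincipalIdealRing S ∧
      ∃ f : R →+* S,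
        Function.Injective ⇑f ∧
        ¬ Function.Surjective ⇑f ∧
        Function.Bijective (fun J : Ideal S => J.comap f) :=
  dedekind_domain_ideal_preserving_pid_extension_general R
end
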